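/- Let R be a left noetherian domain and let A be a skew PBW extension of R with variables x_1,…,x_n, semi-graded by total degree. Then GGKdim(A) = limsup_{k→∞} log_k(∑_{i=0}^k rank_R A_i) = 1 + deg(Gp_A(t)) = n, where Gp_A(t) is the generalized Hilbert polynomial of A (of degree n−1). -/

import Mathlib

/-- A *skew PBW extension* of a ring `R` inside a ring `A`, with variables `x 0, …, x (n-1)`. -/
structure SkewPBWExtension (R A : Type*) [Ring R] [Ring A] (n : ℕ) (x : Fin n → A) where
  ι : R →+* A
  ι_injective : Function.Injective ι
  basis : ∀ a : A, ∃! c : (Fin n → ℕ) →₀ R,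
    a = c.sum fun α r => ι r * (List.ofFn fun i => x i ^ α i).prod
  cond3 : ∀ (i : Fin n) (r : R), r ≠ 0 →
    ∃ c : R, c ≠ 0 ∧ ∃ r' : R, x i * ι r = ι c * x i + ι r'
  cond4 : ∀ i j : Fin n, ∃ c : R, c ≠ 0 ∧
    ∃ (r0 : R) (r' : Fin n → R), x j * x i = ι c * (x i * x j) + ι r0 + ∑ k, ι (r' k) * x k

variable {R A : Type*} [Ring R] [Ring A] {n : ℕ} {x : Fin n → A}

/-- The left `R`-submodule of `A` generated by a set `s`. -/
def SkewPBWExtension.rSpan (E : SkewPBWExtension R A n x) (s : Set A) : AddSubgroup A :=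
  AddSubgroup.closure {y : A | ∃ (r : R), ∃ w ∈ s, y = E.ι r * w}

/-- An additive subgroup of `A` stable under left multiplication by (the image of) `R`. -/
def SkewPBWExtension.IsRStable (E : SkewPBWExtension R A n x) (W : AddSubgroup A) : Prop :=
  ∀ (r : R), ∀ w ∈ W, E.ι r * w ∈ W

/-- The tuple `v` spans a *frame* of `A`: a finitely generated free left `R`-submodule
`V ⊆ A` with basis `v` and `1 ∈ V`. -/
def SkewPBWExtension.IsFrame (E : SkewPBWExtension R A n x) {k : ℕ} (v : Fin k → A) :
    Prop :=
  (∀ c c' : Fin k → R, ∑ i, E.ι (c i) * v i = ∑ i, E.ι (c' i) * v i → c = c') ∧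
  (1 : A) ∈ E.rSpan (Set.range v)

/-- `V^m`: the left `R`-submodule generated by products of `m` elements of the frame. -/
def SkewPBWExtension.framePow (E : SkewPBWExtension R A n x) {k : ℕ} (v : Fin k → A)
    (m : ℕ) : AddSubgroup A :=
  E.rSpan {y : A | ∃ w : Fin m → A,
    (∀ j, w j ∈ E.rSpan (Set.range v)) ∧ y = (List.ofFn w).prod}

/-- The uniform (Goldie) dimension of a left `R`-submodule `W` of `A`. -/
noncomputable def SkewPBWExtension.udim (E : SkewPBWExtension R A n x)
    (W : AddSubgroup A) : ℕ :=
  sSup {m : ℕ | ∃ f : Fin m → AddSubgroup A, (∀ i, f i ≠ ⊥) ∧ (∀ i, f i ≤ W) ∧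
    (∀ i, E.IsRStable (f i)) ∧ iSupIndep f}

/-- The generalized Gelfand-Kirillov dimension of a skew PBW extension:
`GGKdim(A) = sup_V limsup_{m→∞} log_m (udim V^m)` over all frames `V`. -/
noncomputable def SkewPBWExtension.GGKdim (E : SkewPBWExtension R A n x) : EReal :=
  ⨆ (k : ℕ) (v : Fin k → A) (_ : E.IsFrame v),
    Filter.limsup (fun m : ℕ => ((Real.logb m (E.udim (E.framePow v m)) : ℝ) : EReal))
      Filter.atTop

/-- `Gp_A(t) = (1/(n-1)!) (t+1)(t+2)⋯(t+n-1)`, the generalized Hilbert polynomial. -/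
noncomputable def skewPBWHilbertPolynomial (n : ℕ) : Polynomial ℚ :=
  Polynomial.C (((n - 1).factorial : ℚ))⁻¹ *
    ∏ i ∈ Finset.range (n - 1), (Polynomial.X + Polynomial.C ((i : ℚ) + 1))

/-!
Let `F_p ⊆ A` be the left `R`-span of the standard monomials of total degree `≤ p`. The relations
of a skew PBW extension give `x_i F_p ⊆ F_{p+1}` (commuting `x_i` past a smaller variable `x_j`
only costs a coefficient in `R` and terms of lower degree), hence `F_p F_q ⊆ F_{p+q}`.
A frame lies in some `F_d`, so `V^m ⊆ F_{dm}`, which is free on at most `(dm+1)^n` monomials.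
A left noetherian domain has the strong rank condition, so independent nonzero submodules of a
free module of rank `N` number at most `N`: `udim V^m ≤ (dm+1)^n`. For the frame
`R + Rx_1 + ⋯ + Rx_n`, `V^m` contains the monomials with all exponents `≤ m/n`, whose `R`-lines
are independent, so `udim V^m ≥ (m/n+1)^n`. Thus `GGKdim A = n`. The hockey-stick identity gives
`∑_{i ≤ m} C(n+i-1, i) = C(n+m, n)`, which also grows like `m^n`.
-/

open Filter Finset Topology Real

theorem iSupIndep.eq_zero_of_sum_eq_zero {G ι : Type*} [AddCommGroup G] [Fintype ι]
    {f : ι → AddSubgroup G} (hf : iSupIndep f) {a : ι → G} (ha : ∀ i, a i ∈ f i)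
    (hsum : ∑ i, a i = 0) (i : ι) : a i = 0 := by
  classical
  refine AddSubgroup.disjoint_def.1 (hf i) (ha i) ?_
  rw [eq_neg_of_add_eq_zero_left ((add_sum_erase _ a (mem_univ i)).trans hsum)]
  exact neg_mem <| sum_mem fun j hj =>
    AddSubgroup.mem_iSup_of_mem j <| AddSubgroup.mem_iSup_of_mem (ne_of_mem_erase hj) (ha j)

theorem List.prod_ofFn_update_mul {M : Type*} [Monoid M] {k : ℕ} (f : Fin k → M) (i : Fin k)
    (hf : ∀ j < i, f j = 1) (a : M) :
    (List.ofFn (Function.update f i (a * f i))).prod = a * (List.ofFn f).prod := by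
  induction k with
  | zero => exact i.elim0
  | succ k ih =>
    rw [List.ofFn_succ, List.ofFn_succ, List.prod_cons, List.prod_cons]
    induction i using Fin.cases with
    | zero => simp [mul_assoc]
    | succ i =>
      have hupdate : (fun j => Function.update f i.succ (a * f i.succ) j.succ) =
          Function.update (fun j => f j.succ) i (a * f i.succ) := by
        funext j
        simp [Function.update_apply]
      rw [Function.update_of_ne (Fin.succ_ne_zero i).symm, hf 0 (Fin.succ_pos i), one_mul,
        one_mul, hupdate, ih _ i fun j hj => hf j.succ (Fin.succ_lt_succ_iff.2 hj)]

def stdMonomial {M : Type*} [Monoid M] (x : Fin n → M) (α : Fin n → ℕ) : M :=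
  (List.ofFn fun i => x i ^ α i).prod

section StdMonomial

variable {M : Type*} [Monoid M] (x : Fin n → M)

@[simp]
theorem stdMonomial_zero : stdMonomial x 0 = 1 :=
  List.prod_eq_one fun _ h => by
    obtain ⟨i, rfl⟩ := List.mem_ofFn.1 h
    simp

theorem stdMonomial_add_single {α : Fin n → ℕ} {i : Fin n} (hα : ∀ j < i, α j = 0) :
    stdMonomial x (α + Pi.single i 1) = x i * stdMonomial x α := by
  have hupdate : (fun j => x j ^ (α + Pi.single i 1 : Fin n → ℕ) j) =
      Function.update (fun j => x j ^ α j) i (x i * x i ^ α i) := by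
    funext j
    obtain rfl | hj := eq_or_ne j i
    · simp [pow_succ']
    · simp [hj]
  rw [stdMonomial, hupdate, List.prod_ofFn_update_mul _ i fun j hj => by simp [hα j hj]]
  rfl

@[simp]
theorem stdMonomial_single (i : Fin n) : stdMonomial x (Pi.single i 1) = x i := by
  simpa using stdMonomial_add_single x (α := 0) (i := i) fun _ _ => rfl

end StdMonomial

theorem sum_add_single_one (β : Fin n → ℕ) (j : Fin n) :
    ∑ k, (β + Pi.single j 1 : Fin n → ℕ) k = ∑ k, β k + 1 := by
  simp [sum_add_distrib]

theorem exists_eq_add_single_of_ne_zero {α : Fin n → ℕ} (hα : α ≠ 0) :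
    ∃ (j : Fin n) (β : Fin n → ℕ), α = β + Pi.single j 1 ∧ ∀ k < j, α k = 0 := by
  obtain ⟨k, hk⟩ := Function.ne_iff.1 hα
  obtain ⟨j, hj, hmin⟩ := wellFounded_lt.has_min {k | α k ≠ 0} ⟨k, hk⟩
  refine ⟨j, Function.update α j (α j - 1), ?_, fun k hk => not_not.1 fun h => hmin k h hk⟩
  funext k
  obtain rfl | hkj := eq_or_ne k j
  · simp only [Pi.add_apply, Function.update_self, Pi.single_eq_same]
    exact (Nat.sub_add_cancel (Nat.one_le_iff_ne_zero.2 hj)).symm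
  · simp [hkj]

theorem exists_stdMonomial_eq_mul {M : Type*} [Monoid M] (x : Fin n → M) {α : Fin n → ℕ}
    (hα : α ≠ 0) : ∃ (j : Fin n) (β : Fin n → ℕ), α = β + Pi.single j 1 ∧ (∀ k < j, α k = 0) ∧
      stdMonomial x α = x j * stdMonomial x β := by
  obtain ⟨j, β, rfl, hmin⟩ := exists_eq_add_single_of_ne_zero hα
  refine ⟨j, β, rfl, hmin, stdMonomial_add_single x fun k hk => ?_⟩
  simpa [Pi.single_apply, hk.ne] using hmin k hk

def exponentBox (n p : ℕ) : Finset (Fin n → ℕ) :=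
  Fintype.piFinset fun _ => range (p + 1)

theorem card_exponentBox (n p : ℕ) : (exponentBox n p).card = (p + 1) ^ n := by
  simp [exponentBox]

theorem mem_exponentBox_of_sum_le {α : Fin n → ℕ} {p : ℕ} (h : ∑ i, α i ≤ p) :
    α ∈ exponentBox n p :=
  Fintype.mem_piFinset.2 fun i =>
    mem_range_succ_iff.2 <| (single_le_sum (fun _ _ => Nat.zero_le _) (mem_univ i)).trans h

theorem sum_le_of_mem_exponentBox {α : Fin n → ℕ} {p : ℕ} (h : α ∈ exponentBox n p) :
    ∑ i, α i ≤ n * p := by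
  simpa using sum_le_card_nsmul univ α p fun i _ =>
    mem_range_succ_iff.1 (Fintype.mem_piFinset.1 h i)

def stdFrameExponent (n : ℕ) : Fin (n + 1) → Fin n → ℕ :=
  Fin.cons 0 fun j => Pi.single j 1

theorem stdFrameExponent_injective (n : ℕ) : (stdFrameExponent n).Injective := by
  refine Fin.cons_injective_iff.2 ⟨fun ⟨j, hj⟩ => by simpa using congrFun hj j, fun i j h => ?_⟩
  by_contra hij
  simpa [hij] using congrFun h i

theorem sum_stdFrameExponent_le_one (i : Fin (n + 1)) : ∑ k, stdFrameExponent n i k ≤ 1 := by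
  induction i using Fin.cases <;> simp [stdFrameExponent]

def stdFrame (x : Fin n → A) : Fin (n + 1) → A :=
  fun i => stdMonomial x (stdFrameExponent n i)

theorem tendsto_logb_mul_pow {c : ℝ} (hc : 0 < c) (k : ℕ) :
    Tendsto (fun m : ℕ => logb m (c * (m : ℝ) ^ k)) atTop (𝓝 k) := by
  have hlog : Tendsto (fun m : ℕ => log c / log m + k) atTop (𝓝 (0 + k)) :=
    (tendsto_const_nhds.div_atTop (tendsto_log_atTop.comp tendsto_natCast_atTop_atTop)).add_const _
  rw [zero_add] at hlog
  refine hlog.congr' ?_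
  filter_upwards [eventually_ge_atTop 2] with m hm
  have hm' : (1 : ℝ) < m := by exact_mod_cast hm
  rw [logb_mul hc.ne' (by positivity), logb_pow, logb_self_eq_one hm', mul_one, logb]

theorem limsup_logb_le_of_le_mul_pow {f : ℕ → ℕ} {C : ℝ} (hC : 1 ≤ C) {k : ℕ}
    (hf : ∀ᶠ m : ℕ in atTop, (f m : ℝ) ≤ C * (m : ℝ) ^ k) :
    limsup (fun m : ℕ => ((logb m (f m) : ℝ) : EReal)) atTop ≤ ((k : ℝ) : EReal) := by
  rw [← ((continuous_coe_real_ereal.tendsto _).comp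
    (tendsto_logb_mul_pow (zero_lt_one.trans_le hC) k)).limsup_eq]
  refine limsup_le_limsup ?_
  filter_upwards [hf, eventually_ge_atTop 2] with m hfm hm
  have hm' : (1 : ℝ) < m := by exact_mod_cast hm
  refine EReal.coe_le_coe_iff.2 ?_
  obtain h0 | hpos := (Nat.zero_le (f m)).eq_or_lt
  · rw [← h0, Nat.cast_zero, logb_zero]
    exact logb_nonneg hm' (one_le_mul_of_one_le_of_one_le hC (one_le_pow₀ hm'.le))
  · exact logb_le_logb_of_le hm' (by exact_mod_cast hpos) hfm

theorem le_limsup_logb_of_mul_pow_le {f : ℕ → ℕ} {c : ℝ} (hc : 0 < c) {k : ℕ}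
    (hf : ∀ᶠ m : ℕ in atTop, c * (m : ℝ) ^ k ≤ f m) :
    ((k : ℝ) : EReal) ≤ limsup (fun m : ℕ => ((logb m (f m) : ℝ) : EReal)) atTop := by
  rw [← ((continuous_coe_real_ereal.tendsto _).comp (tendsto_logb_mul_pow hc k)).limsup_eq]
  refine limsup_le_limsup ?_
  filter_upwards [hf, eventually_ge_atTop 2] with m hfm hm
  exact EReal.coe_le_coe_iff.2 <|
    logb_le_logb_of_le (by exact_mod_cast hm) (by positivity) hfm

theorem sum_range_choose_add_sub_one {n : ℕ} (hn : 0 < n) (m : ℕ) :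
    ∑ i ∈ range (m + 1), (n + i - 1).choose i = (n + m).choose n := by
  obtain ⟨k, rfl⟩ : ∃ k, n = k + 1 := ⟨n - 1, by omega⟩
  have hterm : ∀ i, (k + 1 + i - 1).choose i = (i + k).choose k := fun i => by
    rw [show k + 1 + i - 1 = i + k by omega, Nat.choose_symm_add]
  simp only [hterm]
  rw [Nat.sum_range_add_choose]
  congr 1
  ring

theorem limsup_logb_sum_choose {n : ℕ} (hn : 0 < n) :
    limsup (fun m : ℕ =>
      ((logb m (∑ i ∈ range (m + 1), ((n + i - 1).choose i : ℝ)) : ℝ) : EReal)) atTop =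
      ((n : ℝ) : EReal) := by
  simp_rw [← Nat.cast_sum, sum_range_choose_add_sub_one hn]
  refine le_antisymm (limsup_logb_le_of_le_mul_pow (C := 2 ^ n) (one_le_pow₀ one_le_two) ?_)
    (le_limsup_logb_of_mul_pow_le (c := (n.factorial : ℝ)⁻¹) (by positivity)
      (.of_forall fun m => ?_))
  · filter_upwards [eventually_ge_atTop 1] with m hm
    calc (((n + m).choose n : ℕ) : ℝ) ≤ ((m + 1) ^ n : ℕ) := by
          rw [add_comm]; exact_mod_cast Nat.choose_add_le_add_one_pow m n
      _ ≤ 2 ^ n * (m : ℝ) ^ n := by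
          rw [← mul_pow]; push_cast; gcongr; linarith [(Nat.one_le_cast (α := ℝ)).2 hm]
  · calc (n.factorial : ℝ)⁻¹ * m ^ n ≤ ((n + m + 1 - n : ℕ) : ℝ) ^ n / n.factorial := by
          rw [inv_mul_eq_div, show n + m + 1 - n = m + 1 by omega]; push_cast; gcongr; linarith
      _ ≤ _ := Nat.pow_le_choose n (n + m)

theorem natDegree_skewPBWHilbertPolynomial (n : ℕ) :
    (skewPBWHilbertPolynomial n).natDegree = n - 1 := by
  rw [skewPBWHilbertPolynomial, Polynomial.natDegree_C_mul (by positivity),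
    Polynomial.natDegree_prod_of_monic _ _ fun i _ => Polynomial.monic_X_add_C _]
  simp only [Polynomial.natDegree_X_add_C, sum_const, card_range, smul_eq_mul, mul_one]

namespace SkewPBWExtension

variable (E : SkewPBWExtension R A n x)

noncomputable def monomialSum : ((Fin n → ℕ) →₀ R) →+ A :=
  Finsupp.liftAddHom fun α => (AddMonoidHom.mulRight (stdMonomial x α)).comp E.ι.toAddMonoidHom

theorem bijective_monomialSum : Function.Bijective E.monomialSum :=
  (Function.bijective_iff_existsUnique _).2 fun a => by
    obtain ⟨c, hc, huniq⟩ := E.basis a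
    exact ⟨c, hc.symm, fun c' h => huniq c' h.symm⟩

noncomputable def coord : A ≃+ ((Fin n → ℕ) →₀ R) :=
  (AddEquiv.ofBijective E.monomialSum E.bijective_monomialSum).symm

theorem coord_symm_apply (c : (Fin n → ℕ) →₀ R) :
    E.coord.symm c = c.sum fun α r => E.ι r * stdMonomial x α :=
  rfl

theorem coord_ι_mul_stdMonomial (r : R) (α : Fin n → ℕ) :
    E.coord (E.ι r * stdMonomial x α) = Finsupp.single α r := by
  refine E.coord.eq_symm_apply.1 ?_
  rw [coord_symm_apply, Finsupp.sum_single_index (by simp)]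

theorem coord_ι_mul (r : R) (a : A) : E.coord (E.ι r * a) = r • E.coord a := by
  suffices h : ∀ c, E.coord.symm (r • c) = E.ι r * E.coord.symm c by
    simpa using congrArg E.coord (h (E.coord a)).symm
  intro c
  induction c using Finsupp.induction_linear with
  | zero => simp
  | add c c' hc hc' => rw [smul_add, map_add, map_add, hc, hc', mul_add]
  | single α s =>
    rw [Finsupp.smul_single, smul_eq_mul, ← E.coord_ι_mul_stdMonomial, ← E.coord_ι_mul_stdMonomial]
    simp [mul_assoc]

theorem stdMonomial_ne_zero [Nontrivial R] (E : SkewPBWExtension R A n x) (α : Fin n → ℕ) :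
    stdMonomial x α ≠ 0 := fun h => by
  simpa [h, eq_comm] using E.coord_ι_mul_stdMonomial 1 α

theorem ι_mul_mem_rSpan {s : Set A} {w : A} (hw : w ∈ s) (r : R) : E.ι r * w ∈ E.rSpan s :=
  AddSubgroup.subset_closure ⟨r, w, hw, rfl⟩

theorem subset_rSpan (s : Set A) : s ⊆ E.rSpan s := fun w hw => by
  simpa using E.ι_mul_mem_rSpan hw 1

theorem rSpan_le_of_forall {s : Set A} {W : AddSubgroup A}
    (h : ∀ r, ∀ w ∈ s, E.ι r * w ∈ W) : E.rSpan s ≤ W :=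
  (AddSubgroup.closure_le W).2 <| by
    rintro _ ⟨r, w, hw, rfl⟩
    exact h r w hw

theorem rSpan_le {s : Set A} {W : AddSubgroup A} (hW : E.IsRStable W) (h : s ⊆ W) :
    E.rSpan s ≤ W :=
  E.rSpan_le_of_forall fun r w hw => hW r w (h hw)

theorem rSpan_isRStable (s : Set A) : E.IsRStable (E.rSpan s) := fun r _ hw =>
  E.rSpan_le_of_forall (W := (E.rSpan s).comap (AddMonoidHom.mulLeft (E.ι r)))
    (fun r' w hw' => by simpa [← mul_assoc] using E.ι_mul_mem_rSpan hw' (r * r')) hw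

theorem rSpan_mono {s t : Set A} (h : s ⊆ t) : E.rSpan s ≤ E.rSpan t :=
  E.rSpan_le (E.rSpan_isRStable t) (h.trans (E.subset_rSpan t))

theorem coord_mem_supported {S : Set (Fin n → ℕ)} {a : A}
    (ha : a ∈ E.rSpan (stdMonomial x '' S)) : E.coord a ∈ Finsupp.supported R R S := by
  refine E.rSpan_le_of_forall (W := (Finsupp.supported R R S).toAddSubgroup.comap
    E.coord.toAddMonoidHom) ?_ ha
  rintro r _ ⟨α, hα, rfl⟩
  simpa [coord_ι_mul_stdMonomial] using Finsupp.single_mem_supported R r hα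

def filtration (p : ℕ) : AddSubgroup A :=
  E.rSpan (stdMonomial x '' {α | ∑ i, α i ≤ p})

theorem filtration_isRStable (p : ℕ) : E.IsRStable (E.filtration p) :=
  E.rSpan_isRStable _

theorem filtration_mono {p q : ℕ} (h : p ≤ q) : E.filtration p ≤ E.filtration q :=
  E.rSpan_mono (Set.image_mono fun _ hα => le_trans hα h)

theorem ι_mul_stdMonomial_mem_filtration (r : R) {α : Fin n → ℕ} {p : ℕ} (hα : ∑ i, α i ≤ p) :
    E.ι r * stdMonomial x α ∈ E.filtration p :=
  E.ι_mul_mem_rSpan (s := stdMonomial x '' {α | ∑ i, α i ≤ p}) ⟨α, hα, rfl⟩ r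

theorem stdMonomial_mem_filtration {α : Fin n → ℕ} {p : ℕ} (hα : ∑ i, α i ≤ p) :
    stdMonomial x α ∈ E.filtration p :=
  E.subset_rSpan (stdMonomial x '' {α | ∑ i, α i ≤ p}) ⟨α, hα, rfl⟩

theorem x_mul_mem_filtration_of_stdMonomial {j : Fin n} {p : ℕ}
    (hj : ∀ α : Fin n → ℕ, ∑ i, α i ≤ p → x j * stdMonomial x α ∈ E.filtration (p + 1))
    {b : A} (hb : b ∈ E.filtration p) : x j * b ∈ E.filtration (p + 1) := by
  refine E.rSpan_le_of_forall (W := (E.filtration (p + 1)).comap (AddMonoidHom.mulLeft (x j)))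
    ?_ hb
  rintro r _ ⟨α, hα, rfl⟩
  obtain rfl | hr := eq_or_ne r 0
  · simp
  obtain ⟨c, -, r', hc⟩ := E.cond3 j r hr
  change x j * (E.ι r * stdMonomial x α) ∈ E.filtration (p + 1)
  rw [← mul_assoc, hc, add_mul, mul_assoc]
  exact add_mem (E.filtration_isRStable _ c _ (hj α hα))
    (E.ι_mul_stdMonomial_mem_filtration r' (hα.trans p.le_succ))

/-- Induction on the degree, then on `i`: if a variable `x_j` with `j < i` occurs in `x^α`,
write `x^α = x_j x^β` and use `x_i x_j = c x_j x_i + (terms of degree ≤ 1)`. -/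
theorem x_mul_stdMonomial_mem_filtration (p : ℕ) (i : Fin n) {α : Fin n → ℕ}
    (hα : ∑ k, α k ≤ p) : x i * stdMonomial x α ∈ E.filtration (p + 1) := by
  induction p using Nat.strong_induction_on generalizing i α with
  | _ p ihp =>
  induction i using WellFoundedLT.induction generalizing α with
  | _ i ihi =>
  by_cases hlow : ∀ k < i, α k = 0
  · rw [← stdMonomial_add_single x hlow]
    exact E.stdMonomial_mem_filtration (by rw [sum_add_single_one]; omega)
  push Not at hlow
  obtain ⟨k, hki, hk⟩ := hlow
  obtain ⟨j, β, rfl, hmin, hmono⟩ := exists_stdMonomial_eq_mul x (α := α) fun h => hk (by simp [h])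
  have hji : j < i := (not_lt.1 fun hkj => hk (hmin k hkj)).trans_lt hki
  rw [sum_add_single_one] at hα
  have hxβ : ∀ l, x l * stdMonomial x β ∈ E.filtration p := fun l =>
    E.filtration_mono hα (ihp _ (by omega) l le_rfl)
  obtain ⟨c, -, r₀, r', hc⟩ := E.cond4 j i
  have hexpand : x i * stdMonomial x (β + Pi.single j 1) =
      E.ι c * (x j * (x i * stdMonomial x β)) + E.ι r₀ * stdMonomial x β +
        ∑ l, E.ι (r' l) * (x l * stdMonomial x β) := by
    rw [hmono, ← mul_assoc, hc, add_mul, add_mul, sum_mul]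
    simp only [mul_assoc]
  rw [hexpand]
  refine add_mem (add_mem ?_ (E.ι_mul_stdMonomial_mem_filtration r₀ (by omega)))
    (sum_mem fun l _ => E.filtration_isRStable _ _ _ (E.filtration_mono p.le_succ (hxβ l)))
  exact E.filtration_isRStable _ c _
    (E.x_mul_mem_filtration_of_stdMonomial (fun γ hγ => ihi j hji hγ) (hxβ i))

theorem x_mul_mem_filtration (i : Fin n) {p : ℕ} {b : A} (hb : b ∈ E.filtration p) :
    x i * b ∈ E.filtration (p + 1) :=
  E.x_mul_mem_filtration_of_stdMonomial (fun _ hα => E.x_mul_stdMonomial_mem_filtration p i hα) hb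

theorem stdMonomial_mul_mem_filtration (α : Fin n → ℕ) {q : ℕ} {b : A}
    (hb : b ∈ E.filtration q) : stdMonomial x α * b ∈ E.filtration (q + ∑ i, α i) := by
  induction hd : ∑ i, α i generalizing α with
  | zero =>
    obtain rfl : α = 0 := funext fun i => sum_eq_zero_iff.1 hd i (mem_univ i)
    simpa using hb
  | succ d ih =>
    obtain ⟨j, β, rfl, -, hmono⟩ := exists_stdMonomial_eq_mul x (α := α) (by rintro rfl; simp at hd)
    rw [hmono, mul_assoc]
    exact E.x_mul_mem_filtration j (ih β (by rw [sum_add_single_one] at hd; omega))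

theorem mul_mem_filtration {p q : ℕ} {a b : A} (ha : a ∈ E.filtration p)
    (hb : b ∈ E.filtration q) : a * b ∈ E.filtration (p + q) := by
  refine E.rSpan_le_of_forall (W := (E.filtration (p + q)).comap (AddMonoidHom.mulRight b)) ?_ ha
  rintro r _ ⟨α, hα, rfl⟩
  change E.ι r * stdMonomial x α * b ∈ E.filtration (p + q)
  rw [mul_assoc]
  exact E.filtration_isRStable _ r _
    (E.filtration_mono (by have : ∑ i, α i ≤ p := hα; omega)
      (E.stdMonomial_mul_mem_filtration α hb))

theorem prod_ofFn_mem_filtration {d m : ℕ} {w : Fin m → A} (hw : ∀ j, w j ∈ E.filtration d) :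
    (List.ofFn w).prod ∈ E.filtration (d * m) := by
  induction m with
  | zero => simpa using E.stdMonomial_mem_filtration (α := 0) (p := 0) (by simp)
  | succ m ih =>
    rw [List.ofFn_succ, List.prod_cons, mul_add_one, add_comm]
    exact E.mul_mem_filtration (hw 0) (ih fun j => hw j.succ)

theorem exists_mem_filtration (a : A) : ∃ p, a ∈ E.filtration p := by
  obtain ⟨c, rfl⟩ := E.coord.symm.surjective a
  refine ⟨c.support.sup fun α => ∑ i, α i, ?_⟩
  rw [coord_symm_apply]
  exact sum_mem fun α hα => E.ι_mul_stdMonomial_mem_filtration _ (le_sup hα)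

theorem exists_forall_mem_filtration {k : ℕ} (v : Fin k → A) :
    ∃ d, ∀ i, v i ∈ E.filtration d := by
  choose p hp using fun i => E.exists_mem_filtration (v i)
  exact ⟨univ.sup p, fun i => E.filtration_mono (le_sup (mem_univ i)) (hp i)⟩

theorem filtration_le_rSpan_exponentBox (p : ℕ) :
    E.filtration p ≤ E.rSpan (stdMonomial x '' ↑(exponentBox n p)) :=
  E.rSpan_mono (Set.image_mono fun _ => mem_exponentBox_of_sum_le)

theorem linearIndependent_coord_of_iSupIndep [IsDomain R] {ι : Type*} [Fintype ι]
    {f : ι → AddSubgroup A} (hf : ∀ i, E.IsRStable (f i)) (hind : iSupIndep f) {u : ι → A}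
    (hu : ∀ i, u i ∈ f i) (hu0 : ∀ i, u i ≠ 0) : LinearIndependent R (E.coord ∘ u) := by
  refine Fintype.linearIndependent_iff.2 fun g hg i => ?_
  have hsum : ∑ i, E.ι (g i) * u i = 0 := by
    apply E.coord.injective
    simpa [map_sum, coord_ι_mul] using hg
  have hi := congrArg E.coord (hind.eq_zero_of_sum_eq_zero (fun i => hf i _ _ (hu i)) hsum i)
  rw [coord_ι_mul, map_zero] at hi
  exact (smul_eq_zero.1 hi).resolve_right (by simpa using hu0 i)

theorem iSupIndep_rSpan_stdMonomial {ι : Type*} {e : ι → Fin n → ℕ} (he : e.Injective) :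
    iSupIndep fun i => E.rSpan {stdMonomial x (e i)} := by
  intro i
  refine AddSubgroup.disjoint_def.2 fun {a} hai hasup => ?_
  have hle : ⨆ (j) (_ : j ≠ i), E.rSpan {stdMonomial x (e j)} ≤
      E.rSpan (stdMonomial x '' {e i}ᶜ) :=
    iSup₂_le fun j hj => E.rSpan_mono (Set.singleton_subset_iff.2 ⟨e j, he.ne hj, rfl⟩)
  have h₁ := E.coord_mem_supported (S := {e i}) (by rwa [Set.image_singleton])
  have h₂ := E.coord_mem_supported (hle hasup)
  simpa using Submodule.disjoint_def.1
    (Finsupp.disjoint_supported_supported disjoint_compl_right) _ h₁ h₂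

theorem isFrame_stdFrame : E.IsFrame (stdFrame x) := by
  refine ⟨fun c c' h => funext fun i => ?_,
    E.subset_rSpan _ ⟨0, by simp [stdFrame, stdFrameExponent]⟩⟩
  have hi := congrArg (fun a => E.coord a (stdFrameExponent n i)) h
  simpa [stdFrame, coord_ι_mul_stdMonomial, Finsupp.single_apply,
    (stdFrameExponent_injective n).eq_iff] using hi

theorem stdMonomial_mem_framePow {m : ℕ} {α : Fin n → ℕ} (hα : ∑ i, α i ≤ m) :
    stdMonomial x α ∈ E.framePow (stdFrame x) m := by
  suffices ∃ w : Fin m → A, (∀ j, w j ∈ Set.range (stdFrame x)) ∧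
      stdMonomial x α = (List.ofFn w).prod by
    obtain ⟨w, hw, h⟩ := this
    exact E.subset_rSpan _ ⟨w, fun j => E.subset_rSpan _ (hw j), h⟩
  induction m generalizing α with
  | zero =>
    obtain rfl : α = 0 := funext fun i => sum_eq_zero_iff.1 (Nat.le_zero.1 hα) i (mem_univ i)
    exact ⟨finZeroElim, finZeroElim, by simp⟩
  | succ m ih =>
    obtain ⟨i, β, hβ, hmul⟩ : ∃ i β, ∑ k, β k ≤ m ∧
        stdMonomial x α = stdFrame x i * stdMonomial x β := by
      obtain rfl | hα0 := eq_or_ne α 0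
      · exact ⟨0, 0, by simp, by simp [stdFrame, stdFrameExponent]⟩
      obtain ⟨j, β, rfl, -, h⟩ := exists_stdMonomial_eq_mul x hα0
      rw [sum_add_single_one] at hα
      exact ⟨j.succ, β, by omega, by simpa [stdFrame, stdFrameExponent] using h⟩
    obtain ⟨w, hw, hprod⟩ := ih hβ
    exact ⟨Fin.cons (stdFrame x i) w, Fin.cases ⟨i, rfl⟩ hw, by simp [List.ofFn_succ, hmul, hprod]⟩

theorem framePow_le_filtration {k d : ℕ} {v : Fin k → A} (hv : ∀ i, v i ∈ E.filtration d)
    (m : ℕ) : E.framePow v m ≤ E.filtration (d * m) :=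
  E.rSpan_le (E.filtration_isRStable _) <| by
    rintro _ ⟨w, hw, rfl⟩
    exact E.prod_ofFn_mem_filtration fun j =>
      E.rSpan_le (E.filtration_isRStable d) (Set.range_subset_iff.2 hv) (hw j)

variable [IsDomain R] [IsNoetherianRing R]

theorem card_le_of_iSupIndep {W : AddSubgroup A} {T : Finset (Fin n → ℕ)}
    (hWT : W ≤ E.rSpan (stdMonomial x '' ↑T)) {m : ℕ} (f : Fin m → AddSubgroup A)
    (hne : ∀ i, f i ≠ ⊥) (hle : ∀ i, f i ≤ W) (hf : ∀ i, E.IsRStable (f i))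
    (hind : iSupIndep f) : m ≤ T.card := by
  classical
  choose u hu hu0 using fun i => ((f i).bot_or_exists_ne_zero.resolve_left (hne i))
  have hspan : Set.range (E.coord ∘ u) ≤
      ↑(Submodule.span R (↑(T.image fun α => Finsupp.single α (1 : R)) :
        Set ((Fin n → ℕ) →₀ R))) := by
    rintro _ ⟨i, rfl⟩
    rw [coe_image, ← Finsupp.supported_eq_span_single]
    exact E.coord_mem_supported (hWT (hle i (hu i)))
  have := linearIndependent_le_span' _ (E.linearIndependent_coord_of_iSupIndep hf hind hu hu0) _
    hspan
  simp only [Cardinal.mk_fin, coe_sort_coe, Fintype.card_coe, Nat.cast_le] at this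
  exact this.trans card_image_le

theorem udim_le_card {W : AddSubgroup A} {T : Finset (Fin n → ℕ)}
    (hWT : W ≤ E.rSpan (stdMonomial x '' ↑T)) : E.udim W ≤ T.card :=
  csSup_le ⟨0, finZeroElim, finZeroElim, finZeroElim, finZeroElim, fun i => i.elim0⟩
    fun _ ⟨f, hne, hle, hf, hind⟩ => E.card_le_of_iSupIndep hWT f hne hle hf hind

/-- `udim` is an `sSup` in `ℕ`, which is `0` on an unbounded set; `hWT` provides the bound. -/
theorem card_le_udim {W : AddSubgroup A} {T T' : Finset (Fin n → ℕ)} (hW : E.IsRStable W)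
    (hWT : W ≤ E.rSpan (stdMonomial x '' ↑T)) (hT' : ∀ α ∈ T', stdMonomial x α ∈ W) :
    T'.card ≤ E.udim W := by
  let e : Fin T'.card → Fin n → ℕ := fun i => T'.equivFin.symm i
  have he : e.Injective := Subtype.val_injective.comp T'.equivFin.symm.injective
  refine le_csSup ⟨T.card, fun _ ⟨f, hne, hle, hf, hind⟩ =>
      E.card_le_of_iSupIndep hWT f hne hle hf hind⟩
    ⟨fun i => E.rSpan {stdMonomial x (e i)}, fun i h => ?_, fun i => ?_,
      fun i => E.rSpan_isRStable _, E.iSupIndep_rSpan_stdMonomial he⟩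
  · exact E.stdMonomial_ne_zero (e i) (AddSubgroup.mem_bot.1 (h ▸ E.subset_rSpan _ rfl))
  · exact E.rSpan_le hW (Set.singleton_subset_iff.2 (hT' _ (T'.equivFin.symm i).2))

theorem udim_framePow_le {k d : ℕ} {v : Fin k → A} (hv : ∀ i, v i ∈ E.filtration d) (m : ℕ) :
    E.udim (E.framePow v m) ≤ (d * m + 1) ^ n := by
  simpa [card_exponentBox] using E.udim_le_card
    ((E.framePow_le_filtration hv m).trans (E.filtration_le_rSpan_exponentBox _))

theorem le_udim_framePow_stdFrame (m : ℕ) :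
    (m / n + 1) ^ n ≤ E.udim (E.framePow (stdFrame x) m) := by
  have hWT := (E.framePow_le_filtration (fun i => E.stdMonomial_mem_filtration
    (sum_stdFrameExponent_le_one i)) m).trans (E.filtration_le_rSpan_exponentBox _)
  rw [← card_exponentBox]
  exact E.card_le_udim (E.rSpan_isRStable _) hWT fun α hα =>
    E.stdMonomial_mem_framePow ((sum_le_of_mem_exponentBox hα).trans (Nat.mul_div_le m n))

theorem limsup_logb_udim_framePow_le {k : ℕ} (v : Fin k → A) :
    limsup (fun m : ℕ => ((logb m (E.udim (E.framePow v m)) : ℝ) : EReal)) atTop ≤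
      ((n : ℝ) : EReal) := by
  obtain ⟨d, hd⟩ := E.exists_forall_mem_filtration v
  refine limsup_logb_le_of_le_mul_pow (C := (d + 1) ^ n) (one_le_pow₀ (by simp)) ?_
  filter_upwards [eventually_ge_atTop 1] with m hm
  calc (E.udim (E.framePow v m) : ℝ) ≤ ((d * m + 1) ^ n : ℕ) := by
        exact_mod_cast E.udim_framePow_le hd m
    _ ≤ (d + 1) ^ n * (m : ℝ) ^ n := by
        rw [← mul_pow]; push_cast; gcongr; nlinarith [(Nat.one_le_cast (α := ℝ)).2 hm]

theorem le_limsup_logb_udim_framePow_stdFrame :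
    ((n : ℝ) : EReal) ≤
      limsup (fun m : ℕ => ((logb m (E.udim (E.framePow (stdFrame x) m)) : ℝ) : EReal)) atTop := by
  have hpos : (0 : ℝ) < (n : ℝ) ^ n := by exact_mod_cast Nat.pow_self_pos
  refine le_limsup_logb_of_mul_pow_le (inv_pos.2 hpos) (.of_forall fun m => ?_)
  calc ((n : ℝ) ^ n)⁻¹ * m ^ n = ((m : ℝ) / n) ^ n := by rw [div_pow, inv_mul_eq_div]
    _ ≤ ((m / n + 1 : ℕ) : ℝ) ^ n := by
        gcongr
        rw [Nat.cast_add_one, ← Nat.floor_div_eq_div (K := ℝ)]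
        exact (Nat.lt_floor_add_one _).le
    _ ≤ _ := by exact_mod_cast E.le_udim_framePow_stdFrame m

theorem GGKdim_eq : E.GGKdim = ((n : ℝ) : EReal) :=
  le_antisymm (iSup_le fun _ => iSup₂_le fun v _ => E.limsup_logb_udim_framePow_le v)
    (le_iSup_of_le (n + 1) <| le_iSup₂_of_le (stdFrame x) E.isFrame_stdFrame
      E.le_limsup_logb_udim_framePow_stdFrame)

end SkewPBWExtension

/-- Let `R` be a left noetherian domain and `A = σ(R)⟨x_1,…,x_n⟩` a skew PBW extension,
semi-graded by total degree (with `rank_R A_i = C(n+i-1, i)`).  Then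
`GGKdim(A) = limsup_{m→∞} log_m (∑_{i=0}^m rank_R A_i) = 1 + deg Gp_A(t) = n`. -/
theorem skewPBWExtension_ggkdim [IsDomain R] [IsNoetherianRing R] (hn : 0 < n)
    (E : SkewPBWExtension R A n x) :
    E.GGKdim =
      Filter.limsup
        (fun m : ℕ =>
          ((Real.logb m (∑ i ∈ Finset.range (m + 1), ((n + i - 1).choose i : ℝ)) : ℝ) :
            EReal)) Filter.atTop ∧
    E.GGKdim = 1 + ((skewPBWHilbertPolynomial n).natDegree : ℝ) ∧
    E.GGKdim = (n : ℝ) := by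
  refine ⟨by rw [E.GGKdim_eq, limsup_logb_sum_choose hn], ?_, E.GGKdim_eq⟩
  rw [E.GGKdim_eq, natDegree_skewPBWHilbertPolynomial, Nat.cast_pred hn, ← EReal.coe_one,
    ← EReal.coe_add, add_sub_cancel]
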